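/- arXiv:2504.06403 — 2 statements merged into one kernel-verified Lean document; each statement's English description precedes it below -/
import Mathlib

section
/- Given full-rank data: if the block matrix [0, Ψ; −W ⊗ I, Φ] has the property that [Ψ; Φ] has rank equal to (n_u+1)(L_0+1) + n_x and the system of equations [0, Ψ; 0, Ψ_Ω; −W_{L_0+1}(z) ⊗ I_{n_y}, Ψ_Y]·[Y_z; G] = [W_{L_0+1}(z) ⊗ U_z; 0; 0] is consistent, then the Y_z-component of every solution is unique and equals H(z)U_z. -/
open Matrix Complex

/-- e^{j ω_k} with ω_k = πk/M. -/
noncomputable def specExp (M k : ℕ) : ℂ := Complex.exp (Complex.I * (Real.pi * k / M))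

/-- Ψ_L(S_{[0,M-1]}) = [F_L(S_{[0,M-1]}), F_L^*(S_{[1,M-1]})], with
    F_L(S_{[m,n]}) = [W_L(e^{jω_m}) ⊗ S_m, ..., W_L(e^{jω_n}) ⊗ S_n],
    W_L(z) = (1, z, ..., z^{L-1})ᵀ; rows indexed by Fin L × α. -/
noncomputable def PsiMat (L M : ℕ) {α : Type} (S : Fin M → α → ℂ) :
    Matrix (Fin L × α) (Fin M ⊕ Fin (M - 1)) ℂ :=
  Matrix.of fun p => Sum.elim
    (fun k : Fin M => specExp M k ^ (p.1 : ℕ) * S k p.2)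
    (fun k : Fin (M - 1) => (starRingEnd ℂ)
      (specExp M (k + 1) ^ (p.1 : ℕ) * S ⟨k.1 + 1, by have := k.isLt; omega⟩ p.2))

/-- Controllability matrix [B, AB, ..., A^{nx-1}B]. -/
noncomputable def ctrbMat {nx : ℕ} {ι : Type} [Fintype ι]
    (A : Matrix (Fin nx) (Fin nx) ℝ) (B : Matrix (Fin nx) ι ℝ) :
    Matrix (Fin nx) (Fin nx × ι) ℝ :=
  Matrix.of fun i p => (A ^ (p.1 : ℕ) * B) i p.2

/-- k-step observability matrix 𝒪_k = [C; CA; ...; CA^{k-1}]. -/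
noncomputable def obsMat (nx ny k : ℕ) (A : Matrix (Fin nx) (Fin nx) ℝ)
    (C : Matrix (Fin ny) (Fin nx) ℝ) : Matrix (Fin k × Fin ny) (Fin nx) ℝ :=
  Matrix.of fun p j => (C * A ^ (p.1 : ℕ)) p.2 j

/-- Observability index ℓ_Σ: smallest k at which the rank of 𝒪_k saturates. -/
noncomputable def obsIndex (nx ny : ℕ) (A : Matrix (Fin nx) (Fin nx) ℝ)
    (C : Matrix (Fin ny) (Fin nx) ℝ) : ℕ :=
  sInf {k : ℕ | (obsMat nx ny k A C).rank = (obsMat nx ny nx A C).rank}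

/-! ### Auxiliary lemmas -/

lemma conj_real_mulVec {m n : ℕ} (R : Matrix (Fin m) (Fin n) ℝ) (v : Fin n → ℂ) :
    (fun i => (starRingEnd ℂ) (((R.map Complex.ofReal).mulVec v) i))
      = (R.map Complex.ofReal).mulVec (fun j => (starRingEnd ℂ) (v j)) := by
  funext i
  simp only [Matrix.mulVec, dotProduct, Matrix.map_apply, map_sum]
  refine Finset.sum_congr rfl fun x _ => ?_
  rw [_root_.map_mul, Complex.conj_ofReal]

lemma real_mulVec_complex_eq_zero {m n : Type} [Fintype m] [Fintype n]
    (R : Matrix m n ℝ) (v : n → ℂ) :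
    (R.map Complex.ofReal).mulVec v = 0 ↔
      R.mulVec (fun j => (v j).re) = 0 ∧ R.mulVec (fun j => (v j).im) = 0 := by
  have key : ∀ i, ((R.map Complex.ofReal).mulVec v) i
      = Complex.mk ((R.mulVec fun j => (v j).re) i) ((R.mulVec fun j => (v j).im) i) := by
    intro i
    simp only [Matrix.mulVec, dotProduct, Matrix.map_apply]
    rw [Complex.ext_iff]
    constructor
    · simp [Complex.re_sum, Complex.mul_re]
    · simp [Complex.im_sum, Complex.mul_im]
  constructor
  · intro h
    have h' : ∀ i, (R *ᵥ fun j => (v j).re) i = 0 ∧ (R *ᵥ fun j => (v j).im) i = 0 := by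
      intro i
      have := congrFun h i
      rw [key i, Pi.zero_apply, Complex.ext_iff] at this
      simpa using this
    exact ⟨funext fun i => (h' i).1, funext fun i => (h' i).2⟩
  · rintro ⟨h1, h2⟩
    funext i
    rw [key i, Pi.zero_apply, Complex.ext_iff]
    exact ⟨by simpa using congrFun h1 i, by simpa using congrFun h2 i⟩

lemma map_pow_ofReal {n : ℕ} (A : Matrix (Fin n) (Fin n) ℝ) (k : ℕ) :
    (A.map Complex.ofReal) ^ k = (A ^ k).map Complex.ofReal := by
  have h1 : A.map Complex.ofReal = A.map Complex.ofRealHom := rfl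
  induction k with
  | zero => simp [Matrix.map_one]
  | succ k ih =>
      rw [pow_succ, pow_succ, ih, h1]
      have : (A ^ k).map Complex.ofReal = (A ^ k).map Complex.ofRealHom := rfl
      rw [this, ← Matrix.map_mul]
      rfl

lemma mulVec_obs_eq {nx ny : ℕ} (A : Matrix (Fin nx) (Fin nx) ℝ)
    (C : Matrix (Fin ny) (Fin nx) ℝ) (k : ℕ) (v : Fin nx → ℂ) (p : Fin k × Fin ny) :
    (((obsMat nx ny k A C).map Complex.ofReal).mulVec v) p
      = ((C.map Complex.ofReal).mulVec (((A.map Complex.ofReal) ^ (p.1 : ℕ)).mulVec v)) p.2 := by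
  rw [map_pow_ofReal, Matrix.mulVec_mulVec]
  have : C.map Complex.ofReal * (A ^ (p.1 : ℕ)).map Complex.ofReal
      = (C * A ^ (p.1 : ℕ)).map Complex.ofReal := by
    rw [show C.map Complex.ofReal = C.map Complex.ofRealHom from rfl,
      show (A ^ (p.1 : ℕ)).map Complex.ofReal = (A ^ (p.1:ℕ)).map Complex.ofRealHom from rfl,
      ← Matrix.map_mul]
    rfl
  rw [this]
  simp only [Matrix.mulVec, dotProduct, Matrix.map_apply, obsMat, Matrix.of_apply]

lemma obs_ker_real {nx ny : ℕ} (A : Matrix (Fin nx) (Fin nx) ℝ)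
    (C : Matrix (Fin ny) (Fin nx) ℝ) {k : ℕ} (hk : k ≤ nx)
    (hrk : (obsMat nx ny k A C).rank = (obsMat nx ny nx A C).rank)
    (w : Fin nx → ℝ) (hw : (obsMat nx ny k A C).mulVec w = 0) :
    (obsMat nx ny nx A C).mulVec w = 0 := by
  have hle : LinearMap.ker (obsMat nx ny nx A C).mulVecLin
      ≤ LinearMap.ker (obsMat nx ny k A C).mulVecLin := by
    intro v hv
    rw [LinearMap.mem_ker] at hv ⊢
    funext p
    have : (obsMat nx ny k A C).mulVecLin v p
        = (obsMat nx ny nx A C).mulVecLin v (⟨Fin.castLE hk p.1, p.2⟩) := by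
      simp only [Matrix.mulVecLin_apply, Matrix.mulVec, dotProduct, obsMat,
        Matrix.of_apply, Fin.coe_castLE]
    rw [this, hv]
    rfl
  have hr1 := (obsMat nx ny k A C).mulVecLin.finrank_range_add_finrank_ker
  have hr2 := (obsMat nx ny nx A C).mulVecLin.finrank_range_add_finrank_ker
  rw [show Module.finrank ℝ (LinearMap.range (obsMat nx ny k A C).mulVecLin)
      = (obsMat nx ny k A C).rank from rfl] at hr1
  rw [show Module.finrank ℝ (LinearMap.range (obsMat nx ny nx A C).mulVecLin)
      = (obsMat nx ny nx A C).rank from rfl] at hr2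
  have hfr : Module.finrank ℝ (LinearMap.ker (obsMat nx ny k A C).mulVecLin)
      ≤ Module.finrank ℝ (LinearMap.ker (obsMat nx ny nx A C).mulVecLin) := by omega
  have heq := Submodule.eq_of_le_of_finrank_le hle hfr
  have hwmem : w ∈ LinearMap.ker (obsMat nx ny k A C).mulVecLin := by
    rwa [LinearMap.mem_ker, Matrix.mulVecLin_apply]
  rw [← heq] at hwmem
  rwa [LinearMap.mem_ker, Matrix.mulVecLin_apply] at hwmem

/-- `N ↦ N.mulVec v` as a linear map in the matrix. -/
noncomputable def mvLin {a b : Type} [Fintype a] [Fintype b] [DecidableEq b] (v : b → ℂ) :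
    Matrix a b ℂ →ₗ[ℂ] (a → ℂ) where
  toFun N := N.mulVec v
  map_add' := by intros N N'; funext i; simp [Matrix.add_mulVec]
  map_smul' := by intros c N; funext i; simp [Matrix.smul_mulVec]

@[simp] lemma mvLin_apply {a b : Type} [Fintype a] [Fintype b] [DecidableEq b] (v : b → ℂ)
    (N : Matrix a b ℂ) : mvLin v N = N.mulVec v := rfl

lemma charpoly_pow_card {n : ℕ} (Ac : Matrix (Fin n) (Fin n) ℂ) :
    Ac ^ n = -∑ i ∈ Finset.range n, Ac.charpoly.coeff i • Ac ^ i := by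
  have h := Ac.aeval_self_charpoly
  rw [Polynomial.aeval_eq_sum_range] at h
  rw [Matrix.charpoly_natDegree_eq_dim, Fintype.card_fin, Finset.sum_range_succ] at h
  have hm : Ac.charpoly.coeff n = 1 := by
    have := (Matrix.charpoly_monic Ac).coeff_natDegree
    rwa [Matrix.charpoly_natDegree_eq_dim, Fintype.card_fin] at this
  rw [hm, one_smul] at h
  linear_combination (norm := module) h

lemma ch_ext {nx ny : ℕ} (Ac : Matrix (Fin nx) (Fin nx) ℂ) (Cc : Matrix (Fin ny) (Fin nx) ℂ)
    (v : Fin nx → ℂ) (h : ∀ ℓ < nx, Cc.mulVec ((Ac ^ ℓ).mulVec v) = 0) :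
    ∀ m, Cc.mulVec ((Ac ^ m).mulVec v) = 0 := by
  intro m
  induction m using Nat.strong_induction_on with
  | _ m ih =>
    by_cases hm : m < nx
    · exact h m hm
    · push_neg at hm
      have hsplit : Ac ^ m = Ac ^ (m - nx) * Ac ^ nx := by
        rw [← pow_add]
        congr 1
        omega
      rw [hsplit, ← Matrix.mulVec_mulVec, charpoly_pow_card]
      have : ((-∑ i ∈ Finset.range nx, Ac.charpoly.coeff i • Ac ^ i).mulVec v)
          = -∑ i ∈ Finset.range nx, Ac.charpoly.coeff i • ((Ac ^ i).mulVec v) := by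
        rw [show ∀ N : Matrix (Fin nx) (Fin nx) ℂ, N.mulVec v = mvLin v N from fun _ => rfl,
          map_neg, map_sum]
        simp
      rw [this]
      rw [show ∀ u : Fin nx → ℂ, Cc.mulVec ((Ac ^ (m - nx)).mulVec u)
          = (Cc.mulVecLin.comp (Ac ^ (m - nx)).mulVecLin) u from fun _ => rfl,
        map_neg, map_sum]
      have hz : ∀ i ∈ Finset.range nx,
          (Cc.mulVecLin.comp (Ac ^ (m - nx)).mulVecLin)
            (Ac.charpoly.coeff i • ((Ac ^ i).mulVec v)) = 0 := by
        intro i hi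
        rw [_root_.map_smul]
        have : (Cc.mulVecLin.comp (Ac ^ (m - nx)).mulVecLin) ((Ac ^ i).mulVec v)
            = Cc.mulVec ((Ac ^ (m - nx + i)).mulVec v) := by
          simp only [LinearMap.comp_apply, Matrix.mulVecLin_apply, Matrix.mulVec_mulVec,
            ← pow_add]
        rw [this, ih (m - nx + i) (by simp at hi; omega)]
        simp
      rw [Finset.sum_congr rfl hz]
      simp

lemma obs_ext {nx ny L0 : ℕ} (A : Matrix (Fin nx) (Fin nx) ℝ)
    (C : Matrix (Fin ny) (Fin nx) ℝ) (hL0 : obsIndex nx ny A C ≤ L0) (v : Fin nx → ℂ)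
    (h : ∀ ℓ < L0, (C.map Complex.ofReal).mulVec (((A.map Complex.ofReal) ^ ℓ).mulVec v) = 0) :
    ∀ m, (C.map Complex.ofReal).mulVec (((A.map Complex.ofReal) ^ m).mulVec v) = 0 := by
  set k := obsIndex nx ny A C with hkdef
  have hne : nx ∈ {k : ℕ | (obsMat nx ny k A C).rank = (obsMat nx ny nx A C).rank} := rfl
  have hkmem : k ∈ {k : ℕ | (obsMat nx ny k A C).rank = (obsMat nx ny nx A C).rank} :=
    Nat.sInf_mem ⟨nx, hne⟩
  have hknx : k ≤ nx := Nat.sInf_le hne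
  have hker_k : ((obsMat nx ny k A C).map Complex.ofReal).mulVec v = 0 := by
    funext p
    rw [mulVec_obs_eq, h (p.1 : ℕ) (lt_of_lt_of_le p.1.isLt hL0)]
    rfl
  have hre := (real_mulVec_complex_eq_zero _ v).mp hker_k
  have hnxre := obs_ker_real A C hknx hkmem _ hre.1
  have hnxim := obs_ker_real A C hknx hkmem _ hre.2
  have hker_nx : ((obsMat nx ny nx A C).map Complex.ofReal).mulVec v = 0 :=
    (real_mulVec_complex_eq_zero _ v).mpr ⟨hnxre, hnxim⟩
  have hnx : ∀ ℓ < nx, (C.map Complex.ofReal).mulVec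
      (((A.map Complex.ofReal) ^ ℓ).mulVec v) = 0 := by
    intro ℓ hℓ
    funext i
    have := congrFun hker_nx (⟨⟨ℓ, hℓ⟩, i⟩ : Fin nx × Fin ny)
    rw [mulVec_obs_eq] at this
    exact this
  exact ch_ext _ _ v hnx

lemma charpoly_eval_ne_zero {n : ℕ} (Ac : Matrix (Fin n) (Fin n) ℂ) (z : ℂ)
    (hz : z ∉ spectrum ℂ Ac) : Polynomial.eval z Ac.charpoly ≠ 0 := by
  have hu : IsUnit (algebraMap ℂ (Matrix (Fin n) (Fin n) ℂ) z - Ac) :=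
    spectrum.notMem_iff.mp hz
  have hdet : IsUnit ((algebraMap ℂ (Matrix (Fin n) (Fin n) ℂ) z - Ac).det) :=
    (Matrix.isUnit_iff_isUnit_det _).mp hu
  have key : Polynomial.eval z Ac.charpoly
      = (algebraMap ℂ (Matrix (Fin n) (Fin n) ℂ) z - Ac).det := by
    rw [Matrix.charpoly]
    rw [show Polynomial.eval z (Matrix.charmatrix Ac).det
        = (Polynomial.evalRingHom z) (Matrix.charmatrix Ac).det from rfl]
    rw [RingHom.map_det]
    congr 1
    ext i j
    by_cases hij : i = j
    · subst hij
      simp [Matrix.charmatrix_apply, Algebra.algebraMap_eq_smul_one, Matrix.one_apply,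
        Matrix.diagonal_apply]
    · simp [Matrix.charmatrix_apply, Algebra.algebraMap_eq_smul_one, Matrix.one_apply,
        Matrix.diagonal_apply, hij]
  rw [key]
  exact hdet.ne_zero

lemma charpoly_kills {nx ny : ℕ} (Ac : Matrix (Fin nx) (Fin nx) ℂ)
    (Cc : Matrix (Fin ny) (Fin nx) ℂ) (v : Fin nx → ℂ) (w : Fin ny → ℂ) (z : ℂ)
    (h : ∀ ℓ : ℕ, Cc.mulVec ((Ac ^ ℓ).mulVec v) = z ^ ℓ • w) :
    (Polynomial.eval z Ac.charpoly) • w = 0 := by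
  have hL : ∀ N : Matrix (Fin nx) (Fin nx) ℂ,
      Cc.mulVec (N.mulVec v) = (Cc.mulVecLin.comp (mvLin v)) N := fun _ => rfl
  have h0 : (Cc.mulVecLin.comp (mvLin v)) (Polynomial.aeval Ac Ac.charpoly) = 0 := by
    rw [Matrix.aeval_self_charpoly]
    simp
  rw [Polynomial.aeval_eq_sum_range, map_sum] at h0
  have hterm : ∀ i ∈ Finset.range (Ac.charpoly.natDegree + 1),
      (Cc.mulVecLin.comp (mvLin v)) (Ac.charpoly.coeff i • Ac ^ i)
        = (Ac.charpoly.coeff i * z ^ i) • w := by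
    intro i _
    rw [_root_.map_smul, ← hL, h i, smul_smul]
  rw [Finset.sum_congr rfl hterm, ← Finset.sum_smul] at h0
  rw [Polynomial.eval_eq_sum_range]
  exact h0

lemma mulVec_sum_comm {n m : ℕ} (R : Matrix (Fin n) (Fin m) ℂ) {J : Type} [Fintype J]
    (g : J → ℂ) (f : J → Fin m → ℂ) (i : Fin n) :
    (R.mulVec (fun c => ∑ j, g j * f j c)) i = ∑ j, g j * (R.mulVec (f j)) i := by
  simp only [Matrix.mulVec, dotProduct, Finset.mul_sum]
  rw [Finset.sum_comm]
  refine Finset.sum_congr rfl fun j _ => Finset.sum_congr rfl fun c _ => by ring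
/-- Theorem 4(i), FRF evaluation: for a non-steady-state input-state-output
    spectrum of a controllable system, with L₀ ≥ ℓ_Σ, the augmented spectrum persistently
    exciting of order L₀+1+n_x, full-rank data and a consistent linear system, the
    Y_z-component of every solution of eq. (sep-1) is unique and equals H(z)U_z. -/
theorem frf_evaluation (M nx nu ny L0 : ℕ)
    (A : Matrix (Fin nx) (Fin nx) ℝ) (B : Matrix (Fin nx) (Fin nu) ℝ)
    (C : Matrix (Fin ny) (Fin nx) ℝ) (D : Matrix (Fin ny) (Fin nu) ℝ)
    (x0 x2M : Fin nx → ℝ)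
    (U : Fin M → Fin nu → ℂ) (X : Fin M → Fin nx → ℂ) (Y : Fin M → Fin ny → ℂ)
    (z : ℂ) (Uz : Fin nu → ℂ)
    (hctrb : (ctrbMat A B).rank = nx)
    (hspec : ∀ k : Fin M, specExp M k • X k
          = (A.map Complex.ofReal).mulVec (X k) + (B.map Complex.ofReal).mulVec (U k)
            + specExp M k • (fun i => (x0 i : ℂ) - (x2M i : ℂ)) ∧
        Y k = (C.map Complex.ofReal).mulVec (X k) + (D.map Complex.ofReal).mulVec (U k))
    (hL0 : obsIndex nx ny A C ≤ L0)
    (hPE : (PsiMat (L0 + 1 + nx) M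
              (fun k => Sum.elim (U k) (fun _ : Unit => specExp M k))).rank
        = Fintype.card (Fin (L0 + 1 + nx) × (Fin nu ⊕ Unit)))
    (hrank : (Matrix.fromRows (PsiMat (L0 + 1) M U)
        (Matrix.fromRows (PsiMat (L0 + 1) M (fun k (_ : Unit) => specExp M k))
          (PsiMat (L0 + 1) M Y))).rank = (nu + 1) * (L0 + 1) + nx)
    (hz : z ∉ spectrum ℂ (A.map Complex.ofReal))
    (hcons : ∃ (Yz : Fin ny → ℂ) (G : (Fin M ⊕ Fin (M - 1)) → ℂ),
      (PsiMat (L0 + 1) M U).mulVec G = (fun p => z ^ (p.1 : ℕ) * Uz p.2) ∧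
      (PsiMat (L0 + 1) M (fun k (_ : Unit) => specExp M k)).mulVec G = 0 ∧
      (PsiMat (L0 + 1) M Y).mulVec G = (fun p => z ^ (p.1 : ℕ) * Yz p.2)) :
    ∀ (Yz : Fin ny → ℂ) (G : (Fin M ⊕ Fin (M - 1)) → ℂ),
      ((PsiMat (L0 + 1) M U).mulVec G = (fun p => z ^ (p.1 : ℕ) * Uz p.2) ∧
       (PsiMat (L0 + 1) M (fun k (_ : Unit) => specExp M k)).mulVec G = 0 ∧
       (PsiMat (L0 + 1) M Y).mulVec G = (fun p => z ^ (p.1 : ℕ) * Yz p.2)) →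
      Yz = ((C.map Complex.ofReal)
            * (z • (1 : Matrix (Fin nx) (Fin nx) ℂ) - A.map Complex.ofReal)⁻¹
            * (B.map Complex.ofReal) + D.map Complex.ofReal).mulVec Uz := by
  intro Yz G hsol
  obtain ⟨hU, hΩ, hY⟩ := hsol
  set Ac := A.map Complex.ofReal with hAc
  set Bc := B.map Complex.ofReal with hBc
  set Cc := C.map Complex.ofReal with hCc
  set Dc := D.map Complex.ofReal with hDc
  set dd : Fin nx → ℂ := fun i => (x0 i : ℂ) - (x2M i : ℂ) with hdd
  set lift : Fin (M - 1) → Fin M := fun k => ⟨k.1 + 1, by have := k.isLt; omega⟩ with hlift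
  set ζ : (Fin M ⊕ Fin (M - 1)) → ℂ := Sum.elim (fun k : Fin M => specExp M k)
    (fun k : Fin (M - 1) => (starRingEnd ℂ) (specExp M (k + 1))) with hζ
  set uu : (Fin M ⊕ Fin (M - 1)) → Fin nu → ℂ :=
    Sum.elim U (fun k c => (starRingEnd ℂ) (U (lift k) c)) with huu
  set xx : (Fin M ⊕ Fin (M - 1)) → Fin nx → ℂ :=
    Sum.elim X (fun k c => (starRingEnd ℂ) (X (lift k) c)) with hxx
  set yy : (Fin M ⊕ Fin (M - 1)) → Fin ny → ℂ :=
    Sum.elim Y (fun k c => (starRingEnd ℂ) (Y (lift k) c)) with hyy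
  set g : ℕ → (Fin M ⊕ Fin (M - 1)) → ℂ := fun ℓ j => G j * ζ j ^ ℓ with hg
  -- entry formulas
  have hentryU : ∀ (p : Fin (L0 + 1) × Fin nu) (j : Fin M ⊕ Fin (M - 1)),
      PsiMat (L0 + 1) M U p j = ζ j ^ (p.1 : ℕ) * uu j p.2 := by
    intro p j
    cases j with
    | inl k => rfl
    | inr k =>
        show (starRingEnd ℂ) (specExp M (k + 1) ^ (p.1 : ℕ) * U ⟨k.1 + 1, _⟩ p.2) = _
        rw [_root_.map_mul, map_pow]
        rfl
  have hentryΩ : ∀ (p : Fin (L0 + 1) × Unit) (j : Fin M ⊕ Fin (M - 1)),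
      PsiMat (L0 + 1) M (fun k (_ : Unit) => specExp M k) p j
        = ζ j ^ (p.1 : ℕ) * ζ j := by
    intro p j
    cases j with
    | inl k => rfl
    | inr k =>
        show (starRingEnd ℂ) (specExp M (k + 1) ^ (p.1 : ℕ) * specExp M (k.1 + 1)) = _
        rw [_root_.map_mul, map_pow]
        rfl
  have hentryY : ∀ (p : Fin (L0 + 1) × Fin ny) (j : Fin M ⊕ Fin (M - 1)),
      PsiMat (L0 + 1) M Y p j = ζ j ^ (p.1 : ℕ) * yy j p.2 := by
    intro p j
    cases j with
    | inl k => rfl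
    | inr k =>
        show (starRingEnd ℂ) (specExp M (k + 1) ^ (p.1 : ℕ) * Y ⟨k.1 + 1, _⟩ p.2) = _
        rw [_root_.map_mul, map_pow]
        rfl
  -- the three families of equations
  have hUeq : ∀ ℓ, ℓ < L0 + 1 → (fun c => ∑ j, g ℓ j * uu j c) = z ^ ℓ • Uz := by
    intro ℓ hℓ
    funext c
    have h1 := congrFun hU (⟨⟨ℓ, hℓ⟩, c⟩ : Fin (L0 + 1) × Fin nu)
    simp only [Matrix.mulVec, dotProduct, hentryU] at h1
    simp only [Pi.smul_apply, smul_eq_mul]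
    rw [← h1]
    exact Finset.sum_congr rfl fun j _ => by rw [hg]; ring
  have hΩeq : ∀ ℓ, ℓ < L0 + 1 → (∑ j, g ℓ j * ζ j) = 0 := by
    intro ℓ hℓ
    have h1 := congrFun hΩ (⟨⟨ℓ, hℓ⟩, ()⟩ : Fin (L0 + 1) × Unit)
    simp only [Matrix.mulVec, dotProduct, hentryΩ, Pi.zero_apply] at h1
    rw [← h1]
    exact Finset.sum_congr rfl fun j _ => by rw [hg]; ring
  have hYeq : ∀ ℓ, ℓ < L0 + 1 → (fun c => ∑ j, g ℓ j * yy j c) = z ^ ℓ • Yz := by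
    intro ℓ hℓ
    funext c
    have h1 := congrFun hY (⟨⟨ℓ, hℓ⟩, c⟩ : Fin (L0 + 1) × Fin ny)
    simp only [Matrix.mulVec, dotProduct, hentryY] at h1
    simp only [Pi.smul_apply, smul_eq_mul]
    rw [← h1]
    exact Finset.sum_congr rfl fun j _ => by rw [hg]; ring
  -- column dynamics
  have hcolx : ∀ j, ζ j • xx j = Ac.mulVec (xx j) + Bc.mulVec (uu j) + ζ j • dd := by
    intro j
    cases j with
    | inl k => exact (hspec k).1
    | inr k =>
        funext i
        have h2 := congrArg (starRingEnd ℂ) (congrFun (hspec (lift k)).1 i)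
        simp only [Pi.add_apply, Pi.smul_apply, smul_eq_mul, map_add, _root_.map_mul] at h2
        rw [congrFun (conj_real_mulVec A (X (lift k))) i,
          congrFun (conj_real_mulVec B (U (lift k))) i] at h2
        have hddc : (starRingEnd ℂ) (dd i) = dd i := by
          rw [hdd]
          simp [map_sub, Complex.conj_ofReal]
        rw [hddc] at h2
        simp only [Pi.add_apply, Pi.smul_apply, smul_eq_mul]
        exact h2
  have hcoly : ∀ j, yy j = Cc.mulVec (xx j) + Dc.mulVec (uu j) := by
    intro j
    cases j with
    | inl k => exact (hspec k).2
    | inr k =>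
        funext i
        have h2 := congrArg (starRingEnd ℂ) (congrFun (hspec (lift k)).2 i)
        simp only [Pi.add_apply, map_add] at h2
        rw [congrFun (conj_real_mulVec C (X (lift k))) i,
          congrFun (conj_real_mulVec D (U (lift k))) i] at h2
        simp only [Pi.add_apply]
        exact h2
  -- recursion for the state combination
  have hrec : ∀ ℓ : ℕ, (fun i => ∑ j, g (ℓ + 1) j * xx j i)
      = Ac.mulVec (fun i => ∑ j, g ℓ j * xx j i)
        + Bc.mulVec (fun c => ∑ j, g ℓ j * uu j c) + (∑ j, g ℓ j * ζ j) • dd := by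
    intro ℓ
    funext i
    simp only [Pi.add_apply, Pi.smul_apply, smul_eq_mul]
    calc (∑ j, g (ℓ + 1) j * xx j i)
        = ∑ j, (g ℓ j * (Ac.mulVec (xx j)) i + g ℓ j * (Bc.mulVec (uu j)) i
            + (g ℓ j * ζ j) * dd i) := by
          refine Finset.sum_congr rfl fun j _ => ?_
          have hc := congrFun (hcolx j) i
          simp only [Pi.add_apply, Pi.smul_apply, smul_eq_mul] at hc
          have hgs : g (ℓ + 1) j = g ℓ j * ζ j := by rw [hg]; simp [pow_succ]; ring
          rw [hgs]
          calc g ℓ j * ζ j * xx j i = g ℓ j * (ζ j * xx j i) := by ring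
            _ = g ℓ j * ((Ac.mulVec (xx j)) i + (Bc.mulVec (uu j)) i + ζ j * dd i) := by
                rw [hc]
            _ = g ℓ j * (Ac.mulVec (xx j)) i + g ℓ j * (Bc.mulVec (uu j)) i
                + (g ℓ j * ζ j) * dd i := by ring
      _ = (∑ j, g ℓ j * (Ac.mulVec (xx j)) i) + (∑ j, g ℓ j * (Bc.mulVec (uu j)) i)
            + ∑ j, (g ℓ j * ζ j) * dd i := by
          rw [← Finset.sum_add_distrib, ← Finset.sum_add_distrib]
      _ = (Ac.mulVec (fun i => ∑ j, g ℓ j * xx j i)) i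
            + (Bc.mulVec (fun c => ∑ j, g ℓ j * uu j c)) i + (∑ j, g ℓ j * ζ j) * dd i := by
          rw [mulVec_sum_comm, mulVec_sum_comm, Finset.sum_mul]
  -- output equation for the combinations
  have hout : ∀ ℓ : ℕ, (fun c => ∑ j, g ℓ j * yy j c)
      = Cc.mulVec (fun i => ∑ j, g ℓ j * xx j i)
        + Dc.mulVec (fun c => ∑ j, g ℓ j * uu j c) := by
    intro ℓ
    funext c
    simp only [Pi.add_apply]
    calc (∑ j, g ℓ j * yy j c)
        = ∑ j, (g ℓ j * (Cc.mulVec (xx j)) c + g ℓ j * (Dc.mulVec (uu j)) c) := by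
          refine Finset.sum_congr rfl fun j _ => ?_
          have hc := congrFun (hcoly j) c
          simp only [Pi.add_apply] at hc
          rw [hc]
          ring
      _ = (∑ j, g ℓ j * (Cc.mulVec (xx j)) c) + ∑ j, g ℓ j * (Dc.mulVec (uu j)) c := by
          rw [← Finset.sum_add_distrib]
      _ = _ := by rw [mulVec_sum_comm, mulVec_sum_comm]
  -- the steady-state solution
  set Xz : Fin nx → ℂ :=
    ((z • (1 : Matrix (Fin nx) (Fin nx) ℂ) - Ac)⁻¹).mulVec (Bc.mulVec Uz) with hXzdef
  have hdet : IsUnit (z • (1 : Matrix (Fin nx) (Fin nx) ℂ) - Ac).det := by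
    have hu := spectrum.notMem_iff.mp hz
    rw [Algebra.algebraMap_eq_smul_one] at hu
    exact (Matrix.isUnit_iff_isUnit_det _).mp hu
  have hXz : Ac.mulVec Xz + Bc.mulVec Uz = z • Xz := by
    have h1 : (z • (1 : Matrix (Fin nx) (Fin nx) ℂ) - Ac)
        * (z • (1 : Matrix (Fin nx) (Fin nx) ℂ) - Ac)⁻¹ = 1 :=
      Matrix.mul_nonsing_inv _ hdet
    have h2 : (z • (1 : Matrix (Fin nx) (Fin nx) ℂ) - Ac).mulVec Xz = Bc.mulVec Uz := by
      rw [hXzdef, Matrix.mulVec_mulVec, h1, Matrix.one_mulVec]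
    rw [Matrix.sub_mulVec, Matrix.smul_mulVec, Matrix.one_mulVec] at h2
    linear_combination (norm := module) (-1 : ℂ) • h2
  set w : Fin ny → ℂ := Yz - (Cc.mulVec Xz + Dc.mulVec Uz) with hwdef
  -- error dynamics
  have hrecsolved : ∀ ℓ, ℓ < L0 + 1 →
      (fun i => ∑ j, g (ℓ + 1) j * xx j i) - z ^ (ℓ + 1) • Xz
        = Ac.mulVec ((fun i => ∑ j, g ℓ j * xx j i) - z ^ ℓ • Xz) := by
    intro ℓ hℓ
    rw [hrec ℓ, hUeq ℓ hℓ, hΩeq ℓ hℓ, zero_smul, add_zero, Matrix.mulVec_smul,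
      Matrix.mulVec_sub, Matrix.mulVec_smul]
    have hzz : z ^ (ℓ + 1) • Xz = z ^ ℓ • (z • Xz) := by
      rw [smul_smul, ← pow_succ]
    rw [hzz, ← hXz]
    module
  have hCe : ∀ ℓ, ℓ < L0 + 1 →
      Cc.mulVec ((fun i => ∑ j, g ℓ j * xx j i) - z ^ ℓ • Xz) = z ^ ℓ • w := by
    intro ℓ hℓ
    have h1 := hout ℓ
    rw [hYeq ℓ hℓ, hUeq ℓ hℓ, Matrix.mulVec_smul] at h1
    rw [Matrix.mulVec_sub, Matrix.mulVec_smul, hwdef]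
    linear_combination (norm := module) (-1 : ℂ) • h1
  set e0 : Fin nx → ℂ := (fun i => ∑ j, g 0 j * xx j i) - z ^ 0 • Xz with he0
  have heA : ∀ ℓ, ℓ < L0 + 1 →
      (fun i => ∑ j, g ℓ j * xx j i) - z ^ ℓ • Xz = (Ac ^ ℓ).mulVec e0 := by
    intro ℓ
    induction ℓ with
    | zero =>
        intro _
        rw [he0, pow_zero Ac, Matrix.one_mulVec]
    | succ n ih =>
        intro h
        have hn : n < L0 + 1 := by omega
        rw [hrecsolved n hn, ih hn, Matrix.mulVec_mulVec, ← pow_succ']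
  have hobs : ∀ ℓ, ℓ < L0 + 1 → Cc.mulVec ((Ac ^ ℓ).mulVec e0) = z ^ ℓ • w := by
    intro ℓ hℓ
    rw [← heA ℓ hℓ]
    exact hCe ℓ hℓ
  set vv : Fin nx → ℂ := Ac.mulVec e0 - z • e0 with hvv
  have hvK : ∀ ℓ < L0, Cc.mulVec ((Ac ^ ℓ).mulVec vv) = 0 := by
    intro ℓ hℓ
    rw [hvv, Matrix.mulVec_sub, Matrix.mulVec_smul, Matrix.mulVec_mulVec, ← pow_succ,
      Matrix.mulVec_sub, Matrix.mulVec_smul, hobs (ℓ + 1) (by omega), hobs ℓ (by omega),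
      smul_smul, ← pow_succ']
    rw [sub_self]
  have hvAll : ∀ m, Cc.mulVec ((Ac ^ m).mulVec vv) = 0 := obs_ext A C hL0 vv hvK
  have hAll : ∀ m, Cc.mulVec ((Ac ^ m).mulVec e0) = z ^ m • w := by
    intro m
    induction m with
    | zero => exact hobs 0 (by omega)
    | succ n ih =>
        have h1 : (Ac ^ (n + 1)).mulVec e0 = (Ac ^ n).mulVec (Ac.mulVec e0) := by
          rw [Matrix.mulVec_mulVec, ← pow_succ]
        have h2 : Ac.mulVec e0 = vv + z • e0 := by
          rw [hvv]
          module
        rw [h1, h2, Matrix.mulVec_add, Matrix.mulVec_smul, Matrix.mulVec_add,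
          Matrix.mulVec_smul, hvAll n, ih, zero_add, smul_smul, ← pow_succ']
  have hkill := charpoly_kills Ac Cc e0 w z hAll
  have hne := charpoly_eval_ne_zero Ac z hz
  have hw0 : w = 0 := by
    rcases smul_eq_zero.mp hkill with h | h
    · exact absurd h hne
    · exact h
  have hYzeq : Yz = Cc.mulVec Xz + Dc.mulVec Uz := by
    rw [hwdef] at hw0
    exact sub_eq_zero.mp hw0
  rw [hYzeq, Matrix.add_mulVec]
  congr 1
  rw [← Matrix.mulVec_mulVec, ← Matrix.mulVec_mulVec, hXzdef]
end

section
/- Under the same persistence-of-excitation and observability hypotheses, the linear system [0, Ψ; 0, Ψ_Ω; −W_{L_0+1}(z) ⊗ I_{n_y}, Ψ_Y]·[T_z; G] = [0; W_{L_0+1}(z) ⊗ z; 0] has a unique solution for T_z ∈ C^{n_y}, and this solution equals the transient T(z) = C(zI−A)^{-1} z (x_0 − x_{2M}) present in the data. -/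
open Matrix Complex

/-!
Let the columns `c` of `Ψ` carry frequency `μ_c`, input `u_c`, state `x_c` and output `y_c`
(conjugated for the second block), so that `μ_c x_c = A x_c + B u_c + μ_c ξ` with
`ξ = x₀ - x_{2M}`. For a vector `G`, the moments `m_i(v) = ∑_c μ_cⁱ G_c v_c` then satisfy
`m_{i+1}(x) = A m_i(x) + B m_i(u) + m_i(μ) ξ`. The first two block rows of the system say
`m_i(u) = 0` and `m_i(μ) = zⁱ⁺¹`, hence `m_i(x) - zⁱ P = Aⁱ (m_0(x) - P)` for the transient state
`P = (zI - A)⁻¹ z ξ`, and the third block row becomes `C Aⁱ (m_0(x) - P) = zⁱ (T_z - T(z))` for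
`i ≤ L₀`. Then `(zI - A)(m_0(x) - P)` is annihilated by `C, …, C A^{L₀-1}`, hence, since
`ℓ_Σ ≤ L₀`, is unobservable; the unobservable subspace is invariant under `(zI - A)⁻¹`, so
`C (m_0(x) - P) = 0`, i.e. `T_z = T(z)`.

For existence, persistency of excitation of order `L₀ + 1 + n_x` and controllability make the
stacked data matrix `[Ψ_{L₀+1}(Û, Ω̂); X]` of full row rank (the fundamental lemma, proved by
reading a left annihilator as a polynomial and eliminating the state with Cayley–Hamilton), so
`G` can be chosen with the prescribed input moments and with `m_0(x) = P`.
-/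

namespace Matrix

section Field

variable {K m n : Type*} [Field K] [Fintype m] [Fintype n] {M : Matrix m n K}

theorem eq_zero_of_vecMul_eq_zero_of_rank_eq_card (h : M.rank = Fintype.card m) {y : m → K}
    (hy : y ᵥ* M = 0) : y = 0 := by
  have hinj : Function.Injective (· ᵥ* M) := by
    rw [vecMul_injective_iff, linearIndependent_iff_card_eq_finrank_span, Set.finrank,
      ← rank_eq_finrank_span_row, h]
  exact hinj (hy.trans (zero_vecMul M).symm)

theorem mulVec_surjective_of_vecMul_injective (h : Function.Injective (· ᵥ* M)) :
    Function.Surjective M.mulVec := by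
  have hrange : LinearMap.range M.mulVecLin = ⊤ :=
    Submodule.eq_top_of_finrank_eq <| by
      rw [Module.finrank_fintype_fun_eq_card, ← (vecMul_injective_iff.mp h).rank_matrix]; rfl
  intro v
  obtain ⟨G, hG⟩ := LinearMap.range_eq_top.mp hrange v
  exact ⟨G, hG⟩

end Field

section RealMatrices

variable {m n : Type*} [Fintype n]

theorem re_map_ofReal_mulVec (R : Matrix m n ℝ) (v : n → ℂ) (i : m) :
    ((R.map ofReal *ᵥ v) i).re = (R *ᵥ fun j => (v j).re) i := by
  simp [mulVec, dotProduct, re_sum]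

theorem im_map_ofReal_mulVec (R : Matrix m n ℝ) (v : n → ℂ) (i : m) :
    ((R.map ofReal *ᵥ v) i).im = (R *ᵥ fun j => (v j).im) i := by
  simp [mulVec, dotProduct, im_sum]

theorem map_ofReal_mulVec_eq_zero_iff (R : Matrix m n ℝ) (v : n → ℂ) :
    R.map ofReal *ᵥ v = 0 ↔ R *ᵥ (fun j => (v j).re) = 0 ∧ R *ᵥ (fun j => (v j).im) = 0 := by
  simp only [funext_iff, Pi.zero_apply, ← re_map_ofReal_mulVec, ← im_map_ofReal_mulVec,
    Complex.ext_iff, zero_re, zero_im, forall_and]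

theorem star_map_ofReal_mulVec (R : Matrix m n ℝ) (v : n → ℂ) :
    star (R.map ofReal *ᵥ v) = R.map ofReal *ᵥ star v := by
  ext i
  simp [mulVec, dotProduct]

theorem map_ofReal_mul_pow {p : Type*} [DecidableEq n] (C : Matrix p n ℝ) (A : Matrix n n ℝ)
    (i : ℕ) : C.map ofReal * A.map ofReal ^ i = (C * A ^ i).map ofReal := by
  rw [show (ofReal : ℝ → ℂ) = ofRealHom from rfl, Matrix.map_mul, Matrix.map_pow]

theorem map_ofReal_pow_mul {p : Type*} [DecidableEq n] (A : Matrix n n ℝ) (B : Matrix n p ℝ)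
    (i : ℕ) : A.map ofReal ^ i * B.map ofReal = (A ^ i * B).map ofReal := by
  rw [show (ofReal : ℝ → ℂ) = ofRealHom from rfl, Matrix.map_mul, Matrix.map_pow]

end RealMatrices

theorem mul_pow_mulVec_eq_zero_of_lt_card {R n p : Type*} [CommRing R] [Nontrivial R]
    [Fintype n] [DecidableEq n] (C : Matrix p n R) (A : Matrix n n R) {v : n → R}
    (hv : ∀ i < Fintype.card n, (C * A ^ i) *ᵥ v = 0) (i : ℕ) : (C * A ^ i) *ᵥ v = 0 := by
  rcases isEmpty_or_nonempty n with hn | hn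
  · rw [Subsingleton.elim v 0, mulVec_zero]
  have hχ : A.charpoly ≠ 1 := fun h =>
    Fintype.card_ne_zero (α := n) (by simpa [h] using A.charpoly_natDegree_eq_dim.symm)
  have hdeg : (Polynomial.X ^ i %ₘ A.charpoly).natDegree < Fintype.card n :=
    A.charpoly_natDegree_eq_dim ▸ Polynomial.natDegree_modByMonic_lt _ A.charpoly_monic hχ
  rw [pow_eq_aeval_mod_charpoly, Polynomial.aeval_eq_sum_range' hdeg, Matrix.mul_sum,
    sum_mulVec]
  exact Finset.sum_eq_zero fun j hj => by
    rw [Matrix.mul_smul, smul_mulVec, hv j (Finset.mem_range.mp hj), smul_zero]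

end Matrix

section Observability

variable {nx ny : ℕ} (A : Matrix (Fin nx) (Fin nx) ℝ) (C : Matrix (Fin ny) (Fin nx) ℝ)

theorem mem_ker_obsMat {k : ℕ} {v : Fin nx → ℝ} :
    v ∈ LinearMap.ker (obsMat nx ny k A C).mulVecLin ↔ ∀ i < k, (C * A ^ i) *ᵥ v = 0 := by
  simp only [LinearMap.mem_ker, mulVecLin_apply, funext_iff, Pi.zero_apply, Prod.forall]
  exact ⟨fun h i hi p => h ⟨i, hi⟩ p, fun h i p => h i i.isLt p⟩

theorem ker_obsMat_antitone :
    Antitone fun k => LinearMap.ker (obsMat nx ny k A C).mulVecLin := fun _ _ hkl _ hv =>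
  (mem_ker_obsMat A C).mpr fun i hi => (mem_ker_obsMat A C).mp hv i (hi.trans_le hkl)

theorem ker_obsMat_eq_of_rank_eq {k : ℕ} (hk : k ≤ nx)
    (h : (obsMat nx ny k A C).rank = (obsMat nx ny nx A C).rank) :
    LinearMap.ker (obsMat nx ny k A C).mulVecLin
      = LinearMap.ker (obsMat nx ny nx A C).mulVecLin := by
  have hle : LinearMap.ker (obsMat nx ny nx A C).mulVecLin
      ≤ LinearMap.ker (obsMat nx ny k A C).mulVecLin := ker_obsMat_antitone A C hk
  have hk' := LinearMap.finrank_range_add_finrank_ker (obsMat nx ny k A C).mulVecLin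
  have hnx := LinearMap.finrank_range_add_finrank_ker (obsMat nx ny nx A C).mulVecLin
  change (obsMat nx ny k A C).rank + _ = _ at hk'
  change (obsMat nx ny nx A C).rank + _ = _ at hnx
  exact (Submodule.eq_of_le_of_finrank_eq hle (by omega)).symm

theorem mul_pow_mulVec_eq_zero_of_obsIndex_le {L : ℕ} (hL : obsIndex nx ny A C ≤ L)
    {v : Fin nx → ℝ} (hv : ∀ i < L, (C * A ^ i) *ᵥ v = 0) (i : ℕ) : (C * A ^ i) *ᵥ v = 0 := by
  have hnx : nx ∈ {k | (obsMat nx ny k A C).rank = (obsMat nx ny nx A C).rank} := rfl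
  have hmem := Nat.sInf_mem ⟨nx, hnx⟩
  have hker := ker_obsMat_eq_of_rank_eq A C (Nat.sInf_le hnx) hmem
  have hv' : v ∈ LinearMap.ker (obsMat nx ny nx A C).mulVecLin :=
    hker ▸ ker_obsMat_antitone A C hL ((mem_ker_obsMat A C).mpr hv)
  refine C.mul_pow_mulVec_eq_zero_of_lt_card A (fun j hj => ?_) i
  exact (mem_ker_obsMat A C).mp hv' j (by simpa using hj)

theorem map_mul_pow_mulVec_eq_zero_of_obsIndex_le {L : ℕ} (hL : obsIndex nx ny A C ≤ L)
    {v : Fin nx → ℂ} (hv : ∀ i < L, (C.map ofReal * A.map ofReal ^ i) *ᵥ v = 0) (i : ℕ) :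
    (C.map ofReal * A.map ofReal ^ i) *ᵥ v = 0 := by
  simp only [map_ofReal_mul_pow, map_ofReal_mulVec_eq_zero_iff] at hv ⊢
  exact ⟨mul_pow_mulVec_eq_zero_of_obsIndex_le A C hL (fun j hj => (hv j hj).1) i,
    mul_pow_mulVec_eq_zero_of_obsIndex_le A C hL (fun j hj => (hv j hj).2) i⟩

end Observability

section DataMatrices

variable {K κ α : Type*} [Field K]

/-- The block Hankel matrix `[W_L(μ_c) ⊗ v_c]_c` of the frequency data `(μ_c, v_c)`. -/
def hankel (L : ℕ) (μ : κ → K) (v : κ → α → K) : Matrix (Fin L × α) κ K :=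
  Matrix.of fun r c => μ c ^ (r.1 : ℕ) * v c r.2

theorem vecMul_hankel_apply (L : ℕ) (μ : κ → K) (v : κ → α → K) [Fintype α]
    (y : Fin L × α → K) (c : κ) :
    (y ᵥ* hankel L μ v) c = ∑ a, (∑ i : Fin L, y (i, a) * μ c ^ (i : ℕ)) * v c a := by
  simp only [vecMul, dotProduct, hankel, of_apply, Fintype.sum_prod_type, Finset.sum_mul]
  rw [Finset.sum_comm]
  exact Finset.sum_congr rfl fun a _ => Finset.sum_congr rfl fun i _ => by ring

variable [Fintype κ]

def moment (μ : κ → K) (v : κ → α → K) (G : κ → K) (i : ℕ) : α → K :=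
  ∑ c, (μ c ^ i * G c) • v c

theorem moment_sumElim {β : Type*} (μ : κ → K) (f : κ → α → K) (g : κ → β → K) (G : κ → K)
    (i : ℕ) : moment μ (fun c => Sum.elim (f c) (g c)) G i
      = Sum.elim (moment μ f G i) (moment μ g G i) := by
  ext (a | b) <;> simp [moment, Finset.sum_apply]

theorem hankel_mulVec_apply (L : ℕ) (μ : κ → K) (v : κ → α → K) (G : κ → K)
    (r : Fin L × α) : (hankel L μ v *ᵥ G) r = moment μ v G r.1 r.2 := by
  simp only [hankel, moment, mulVec, dotProduct, of_apply, Finset.sum_apply, Pi.smul_apply,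
    smul_eq_mul]
  exact Finset.sum_congr rfl fun c _ => by ring

end DataMatrices

section FundamentalLemma

open Polynomial

variable {K n ι κ : Type*} [Field K] [Fintype n] [Fintype ι]
  {A : Matrix n n K} {Bt : Matrix n ι K} {μ : κ → K} {w : κ → ι → K} {x : κ → n → K}

variable (μ w x) in
/-- The left kernel of the data matrix `[H_L(w); X]`, with the `L` Hankel rows belonging to one
input channel collected into a polynomial of degree `< L`. -/
def dataAnnihilator : Submodule K ((ι → K[X]) × (n → K)) where
  carrier := {r | ∀ c, ∑ q, (r.1 q).eval (μ c) * w c q + r.2 ⬝ᵥ x c = 0}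
  add_mem' {r s} hr hs c := by
    simp only [Set.mem_ofPred_eq, Prod.fst_add, Prod.snd_add, Pi.add_apply, eval_add, add_mul,
      Finset.sum_add_distrib, add_dotProduct] at hr hs ⊢
    linear_combination hr c + hs c
  zero_mem' c := by simp
  smul_mem' a r hr c := by
    simp only [Set.mem_ofPred_eq, Prod.smul_fst, Prod.smul_snd, Pi.smul_apply, eval_smul,
      smul_eq_mul, smul_dotProduct, mul_assoc, ← Finset.mul_sum] at hr ⊢
    linear_combination a * hr c

/-- Multiplying an annihilator by `μ_c` and eliminating `μ_c x_c` through the dynamics. -/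
theorem shift_mem_dataAnnihilator (hdyn : ∀ c, μ c • x c = A *ᵥ x c + Bt *ᵥ w c)
    {F : ι → K[X]} {b : n → K}
    (h : (F, b) ∈ dataAnnihilator μ w x) :
    (fun q => X * F q + C ((b ᵥ* Bt) q), b ᵥ* A) ∈ dataAnnihilator μ w x := by
  intro c
  have hstate : (b ᵥ* A) ⬝ᵥ x c + (b ᵥ* Bt) ⬝ᵥ w c = μ c * (b ⬝ᵥ x c) := by
    rw [← dotProduct_mulVec, ← dotProduct_mulVec, ← dotProduct_add, ← hdyn, dotProduct_smul,
      smul_eq_mul]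
  have hsum : ∑ q, (X * F q + C ((b ᵥ* Bt) q)).eval (μ c) * w c q
      = μ c * ∑ q, (F q).eval (μ c) * w c q + (b ᵥ* Bt) ⬝ᵥ w c := by
    simp only [eval_add, eval_mul, eval_X, eval_C, add_mul, Finset.sum_add_distrib,
      Finset.mul_sum, mul_assoc, dotProduct]
  rw [hsum]
  linear_combination μ c * h c + hstate

theorem eq_zero_of_mem_dataAnnihilator_of_rank_hankel [Fintype κ] {N : ℕ}
    (hPE : (hankel N μ w).rank = Fintype.card (Fin N × ι)) {F : ι → K[X]}
    (hF : ∀ q, F q ∈ degreeLT K N) (h : (F, 0) ∈ dataAnnihilator μ w x) : F = 0 := by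
  set y : Fin N × ι → K := fun r => degreeLTEquiv K N ⟨F r.2, hF r.2⟩ r.1
  have hy : y ᵥ* hankel N μ w = 0 := by
    ext c
    have hc := h c
    rw [zero_dotProduct, add_zero] at hc
    rw [vecMul_hankel_apply, Pi.zero_apply, ← hc]
    exact Finset.sum_congr rfl fun q _ => by rw [eval_eq_sum_degreeLTEquiv (hF q)]
  have hy0 := eq_zero_of_vecMul_eq_zero_of_rank_eq_card hPE hy
  ext1 q
  exact (degreeLTEquiv_eq_zero_iff_eq_zero (hF q)).mp (funext fun i => congrFun hy0 (i, q))

variable [DecidableEq n]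

theorem exists_X_pow_mul_add_mem_dataAnnihilator
    (hdyn : ∀ c, μ c • x c = A *ᵥ x c + Bt *ᵥ w c) {F : ι → K[X]} {b : n → K}
    (h : (F, b) ∈ dataAnnihilator μ w x) (j : ℕ) :
    ∃ r : ι → K[X], (∀ q, r q ∈ degreeLT K j) ∧
      (fun q => X ^ j * F q + r q, b ᵥ* A ^ j) ∈ dataAnnihilator μ w x := by
  induction j with
  | zero => exact ⟨0, fun _ => zero_mem _, by simpa using h⟩
  | succ j ih =>
    obtain ⟨r, hr, hmem⟩ := ih
    refine ⟨fun q => X * r q + C (((b ᵥ* A ^ j) ᵥ* Bt) q), fun q => ?_, ?_⟩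
    · have hrq := hr q
      rw [mem_degreeLT, degree_lt_iff_coeff_zero] at hrq ⊢
      intro m hm
      obtain ⟨m, rfl⟩ : ∃ m', m = m' + 1 := ⟨m - 1, by omega⟩
      simp [coeff_X_mul, hrq m (by omega)]
    · convert shift_mem_dataAnnihilator hdyn hmem using 2
      · ext1 q
        ring
      · rw [vecMul_vecMul, pow_succ]

/-- Cayley–Hamilton removes the state part from the `charpoly`-combination of the shifts. -/
theorem exists_charpoly_mul_add_mem_dataAnnihilator
    (hdyn : ∀ c, μ c • x c = A *ᵥ x c + Bt *ᵥ w c) {F : ι → K[X]} {b : n → K}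
    (h : (F, b) ∈ dataAnnihilator μ w x) :
    ∃ r : ι → K[X], (∀ q, r q ∈ degreeLT K (Fintype.card n)) ∧
      (fun q => A.charpoly * F q + r q, 0) ∈ dataAnnihilator μ w x := by
  choose R hR hmem using exists_X_pow_mul_add_mem_dataAnnihilator hdyn h
  set N := Fintype.card n
  have hdeg : A.charpoly.natDegree + 1 = N + 1 := by rw [A.charpoly_natDegree_eq_dim]
  have hχ : ∀ p : K[X],
      A.charpoly * p = ∑ j ∈ Finset.range (N + 1), A.charpoly.coeff j • (X ^ j * p) := by
    intro p
    conv_lhs => rw [as_sum_range_C_mul_X_pow A.charpoly, hdeg]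
    simp only [Finset.sum_mul, smul_eq_C_mul, mul_assoc]
  have hCH : ∑ j ∈ Finset.range (N + 1), A.charpoly.coeff j • A ^ j = 0 := by
    rw [← hdeg, ← aeval_eq_sum_range, aeval_self_charpoly]
  refine ⟨fun q => ∑ j ∈ Finset.range (N + 1), A.charpoly.coeff j • R j q,
    fun q => Submodule.sum_mem _ fun j hj => Submodule.smul_mem _ _ <|
      degreeLT_mono (Nat.lt_succ_iff.mp (Finset.mem_range.mp hj)) (hR j q), ?_⟩
  convert Submodule.sum_mem (t := Finset.range (N + 1)) _
    fun j _ => Submodule.smul_mem _ (A.charpoly.coeff j) (hmem j) using 1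
  ext1
  · ext1 q
    simp only [hχ, Prod.fst_sum, Prod.smul_fst, Finset.sum_apply, Pi.smul_apply, smul_add,
      Finset.sum_add_distrib]
  · simp only [Prod.snd_sum, Prod.smul_snd, ← vecMul_smul, ← vecMul_sum, hCH, vecMul_zero]

variable [Fintype κ]

/-- Multiplied by `charpoly A`, a nonzero input part would have degree `≥ n`, while the
remainder has degree `< n`; persistency of excitation of order `L + n` rules this out. -/
theorem fst_eq_zero_of_mem_dataAnnihilator (hdyn : ∀ c, μ c • x c = A *ᵥ x c + Bt *ᵥ w c)
    {L : ℕ} (hPE : (hankel (L + Fintype.card n) μ w).rank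
      = Fintype.card (Fin (L + Fintype.card n) × ι))
    {F : ι → K[X]} {b : n → K} (hF : ∀ q, F q ∈ degreeLT K L)
    (h : (F, b) ∈ dataAnnihilator μ w x) : F = 0 := by
  obtain ⟨r, hr, hmem⟩ := exists_charpoly_mul_add_mem_dataAnnihilator hdyn h
  have hdeg : ∀ q, A.charpoly * F q + r q ∈ degreeLT K (L + Fintype.card n) := fun q => by
    refine Submodule.add_mem _ ?_ (degreeLT_mono (Nat.le_add_left _ _) (hr q))
    have hFq := hF q
    rw [mem_degreeLT] at hFq ⊢
    rw [degree_mul, A.charpoly_degree_eq_dim, Nat.cast_add, add_comm (L : WithBot ℕ)]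
    exact WithBot.add_lt_add_left WithBot.coe_ne_bot hFq
  have hzero := eq_zero_of_mem_dataAnnihilator_of_rank_hankel hPE hdeg hmem
  ext1 q
  by_contra hq
  have hχr : A.charpoly * F q = -r q := eq_neg_of_add_eq_zero_left (congrFun hzero q)
  have hlt := mem_degreeLT.mp (hr q)
  rw [← degree_neg, ← hχr, ← A.charpoly_degree_eq_dim] at hlt
  exact (degree_le_mul_left A.charpoly hq).not_gt hlt

theorem vecMul_eq_zero_of_mem_dataAnnihilator (hdyn : ∀ c, μ c • x c = A *ᵥ x c + Bt *ᵥ w c)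
    {L : ℕ} (hL : 0 < L) (hPE : (hankel (L + Fintype.card n) μ w).rank
      = Fintype.card (Fin (L + Fintype.card n) × ι))
    {β : n → K} (h : (0, β) ∈ dataAnnihilator μ w x) :
    β ᵥ* Bt = 0 ∧ (0, β ᵥ* A) ∈ dataAnnihilator μ w x := by
  have hshift := shift_mem_dataAnnihilator hdyn h
  have hzero := fst_eq_zero_of_mem_dataAnnihilator hdyn hPE (fun q => by
    rw [Pi.zero_apply, mul_zero, zero_add]
    exact degreeLT_mono hL (mem_degreeLT.mpr ((degree_C_le).trans_lt (by simp)))) hshift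
  rw [hzero] at hshift
  refine ⟨funext fun q => ?_, hshift⟩
  simpa using congrFun hzero q

/-- Once the input part vanishes, the shifts of `(0, b)` give `b Aᵏ Bt = 0` for every `k`. -/
theorem eq_zero_of_mem_dataAnnihilator (hdyn : ∀ c, μ c • x c = A *ᵥ x c + Bt *ᵥ w c)
    (hctrb : ∀ b : n → K, (∀ k, b ᵥ* (A ^ k * Bt) = 0) → b = 0)
    {L : ℕ} (hL : 0 < L) (hPE : (hankel (L + Fintype.card n) μ w).rank
      = Fintype.card (Fin (L + Fintype.card n) × ι))
    {F : ι → K[X]} {b : n → K} (hF : ∀ q, F q ∈ degreeLT K L)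
    (h : (F, b) ∈ dataAnnihilator μ w x) : F = 0 ∧ b = 0 := by
  obtain rfl := fst_eq_zero_of_mem_dataAnnihilator hdyn hPE hF h
  have hpow : ∀ k, ((0 : ι → K[X]), b ᵥ* A ^ k) ∈ dataAnnihilator μ w x := by
    intro k
    induction k with
    | zero => simpa using h
    | succ k ih =>
      simpa [vecMul_vecMul, pow_succ] using (vecMul_eq_zero_of_mem_dataAnnihilator hdyn hL hPE ih).2
  refine ⟨rfl, hctrb b fun k => ?_⟩
  rw [← vecMul_vecMul]
  exact (vecMul_eq_zero_of_mem_dataAnnihilator hdyn hL hPE (hpow k)).1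

/-- The fundamental lemma in the frequency domain. -/
theorem vecMul_hankel_fromRows_injective (hdyn : ∀ c, μ c • x c = A *ᵥ x c + Bt *ᵥ w c)
    (hctrb : ∀ b : n → K, (∀ k, b ᵥ* (A ^ k * Bt) = 0) → b = 0)
    {L : ℕ} (hL : 0 < L) (hPE : (hankel (L + Fintype.card n) μ w).rank
      = Fintype.card (Fin (L + Fintype.card n) × ι)) :
    Function.Injective (· ᵥ* (hankel L μ w).fromRows (Matrix.of fun j c => x c j)) := by
  refine (injective_iff_map_eq_zero (vecMulLinear _)).mpr fun y hy => ?_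
  set F : ι → K[X] := fun q => ((degreeLTEquiv K L).symm fun i => y (Sum.inl (i, q)) : K[X])
  have hF : ∀ q, F q ∈ degreeLT K L := fun q => Submodule.coe_mem _
  have hmem : (F, y ∘ Sum.inr) ∈ dataAnnihilator μ w x := fun c => by
    have hc := congrFun hy c
    simp only [vecMulLinear_apply, vecMul_fromRows, Pi.add_apply, vecMul_hankel_apply] at hc
    refine Eq.trans ?_ hc
    congr 1
    exact Finset.sum_congr rfl fun q _ => by simp [eval_eq_sum_degreeLTEquiv (hF q), F]
  obtain ⟨hF0, hb0⟩ := eq_zero_of_mem_dataAnnihilator hdyn hctrb hL hPE hF hmem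
  ext (⟨i, q⟩ | j)
  · have hq := congrFun hF0 q
    rw [Pi.zero_apply, Submodule.coe_eq_zero, LinearEquiv.map_eq_zero_iff] at hq
    exact congrFun hq i
  · exact congrFun hb0 j

theorem exists_moment_eq (hdyn : ∀ c, μ c • x c = A *ᵥ x c + Bt *ᵥ w c)
    (hctrb : ∀ b : n → K, (∀ k, b ᵥ* (A ^ k * Bt) = 0) → b = 0)
    {L : ℕ} (hL : 0 < L) (hPE : (hankel (L + Fintype.card n) μ w).rank
      = Fintype.card (Fin (L + Fintype.card n) × ι))
    (a : Fin L → ι → K) (e : n → K) :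
    ∃ G, (∀ i : Fin L, moment μ w G i = a i) ∧ moment μ x G 0 = e := by
  obtain ⟨G, hG⟩ := mulVec_surjective_of_vecMul_injective
    (vecMul_hankel_fromRows_injective hdyn hctrb hL hPE) (Sum.elim (fun r => a r.1 r.2) e)
  rw [fromRows_mulVec] at hG
  refine ⟨G, fun i => funext fun q => ?_, funext fun j => ?_⟩
  · rw [← hankel_mulVec_apply L μ w G (i, q)]
    exact congrFun hG (Sum.inl (i, q))
  · simpa [moment, mulVec, dotProduct, mul_comm] using congrFun hG (Sum.inr j)

end FundamentalLemma

section Transient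

variable {K n m p κ : Type*} [Field K] [Fintype n] [Fintype m] [Fintype κ]
  {A : Matrix n n K} {B : Matrix n m K} {C : Matrix p n K} {D : Matrix p m K} {ξ P : n → K}
  {μ : κ → K} {x : κ → n → K} {u : κ → m → K} {y : κ → p → K} {G : κ → K} {z : K} {L : ℕ}

theorem moment_succ (hx : ∀ c, μ c • x c = A *ᵥ x c + B *ᵥ u c + μ c • ξ) (i : ℕ) :
    moment μ x G (i + 1) = A *ᵥ moment μ x G i + B *ᵥ moment μ u G i
      + moment μ (fun c (_ : Unit) => μ c) G i () • ξ := by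
  simp only [moment, mulVec_sum, mulVec_smul, Finset.sum_apply, Pi.smul_apply, smul_eq_mul,
    Finset.sum_smul, ← Finset.sum_add_distrib]
  refine Finset.sum_congr rfl fun c _ => ?_
  rw [show μ c ^ (i + 1) * G c = (μ c ^ i * G c) * μ c by ring, mul_smul, hx]
  module

theorem moment_output_eq_mulVec (hy : ∀ c, y c = C *ᵥ x c + D *ᵥ u c) (i : ℕ) :
    moment μ y G i = C *ᵥ moment μ x G i + D *ᵥ moment μ u G i := by
  simp only [moment, mulVec_sum, mulVec_smul, ← Finset.sum_add_distrib, ← smul_add, ← hy]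

variable [DecidableEq n]

theorem moment_sub_pow_smul_eq (hx : ∀ c, μ c • x c = A *ᵥ x c + B *ᵥ u c + μ c • ξ)
    (hP : (z • 1 - A) *ᵥ P = z • ξ) (hu : ∀ i < L, moment μ u G i = 0)
    (hΩ : ∀ i < L, moment μ (fun c (_ : Unit) => μ c) G i = fun _ => z ^ i * z) :
    ∀ i ≤ L, moment μ x G i - z ^ i • P = (A ^ i) *ᵥ (moment μ x G 0 - P) := by
  have hAP : A *ᵥ P = z • P - z • ξ := by
    rw [← hP, sub_mulVec, smul_mulVec, one_mulVec, sub_sub_cancel]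
  intro i hi
  induction i with
  | zero => simp
  | succ i ih =>
    rw [moment_succ hx, hu i hi, hΩ i hi, pow_succ' A, ← mulVec_mulVec, ← ih (by omega),
      mulVec_sub, mulVec_smul, hAP, mulVec_zero, add_zero]
    ext j
    simp only [Pi.sub_apply, Pi.add_apply, Pi.smul_apply, smul_eq_mul]
    ring

/-- The unobservable subspace is `A`-invariant, so the resolvent `(z - A)⁻¹` preserves it. -/
theorem eq_zero_of_mul_pow_mulVec_eq
    (hobs : ∀ v, (∀ i < L, (C * A ^ i) *ᵥ v = 0) → ∀ i, (C * A ^ i) *ᵥ v = 0)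
    (hz : IsUnit (z • 1 - A)) {e : n → K} {d : p → K}
    (h : ∀ i ≤ L, (C * A ^ i) *ᵥ e = z ^ i • d) : d = 0 := by
  set N : Submodule K (n → K) := ⨅ i : ℕ, LinearMap.ker (C * A ^ i).mulVecLin
  have hN : ∀ v, v ∈ N ↔ ∀ i, (C * A ^ i) *ᵥ v = 0 := fun v => by
    simp [N, Submodule.mem_iInf]
  have hshift : ∀ i (v : n → K), (C * A ^ i) *ᵥ ((z • 1 - A) *ᵥ v)
      = z • (C * A ^ i) *ᵥ v - (C * A ^ (i + 1)) *ᵥ v := fun i v => by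
    rw [mulVec_mulVec, Matrix.mul_sub, Matrix.mul_smul, Matrix.mul_one, Matrix.mul_assoc,
      ← pow_succ, sub_mulVec, smul_mulVec]
  have hmaps : ∀ v ∈ N, (z • 1 - A).mulVecLin v ∈ N := fun v hv => by
    rw [hN] at hv ⊢
    intro i
    rw [mulVecLin_apply, hshift, hv, hv, smul_zero, sub_zero]
  have hinj : Function.Injective (z • 1 - A).mulVec := mulVec_injective_iff_isUnit.mpr hz
  have hw : (z • 1 - A) *ᵥ e ∈ N := (hN _).mpr <| hobs _ fun i hi => by
    rw [hshift, h i hi.le, h (i + 1) hi, smul_smul, ← pow_succ', sub_self]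
  have hsurj := (LinearMap.injective_iff_surjective
    (f := (z • 1 - A).mulVecLin.restrict hmaps)).mp fun v v' hvv' =>
      Subtype.ext (hinj (congrArg Subtype.val hvv'))
  obtain ⟨⟨e', he'N⟩, he'⟩ := hsurj ⟨_, hw⟩
  have he : e' = e := hinj (congrArg Subtype.val he')
  have := (hN e').mp he'N 0
  rwa [he, h 0 (Nat.zero_le _), pow_zero, one_smul] at this

theorem eq_mulVec_of_moment_eq (hx : ∀ c, μ c • x c = A *ᵥ x c + B *ᵥ u c + μ c • ξ)
    (hy : ∀ c, y c = C *ᵥ x c + D *ᵥ u c)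
    (hobs : ∀ v, (∀ i < L, (C * A ^ i) *ᵥ v = 0) → ∀ i, (C * A ^ i) *ᵥ v = 0)
    (hz : IsUnit (z • 1 - A)) (hP : (z • 1 - A) *ᵥ P = z • ξ) {T : p → K}
    (hu : ∀ i ≤ L, moment μ u G i = 0)
    (hΩ : ∀ i ≤ L, moment μ (fun c (_ : Unit) => μ c) G i = fun _ => z ^ i * z)
    (hT : ∀ i ≤ L, moment μ y G i = z ^ i • T) : T = C *ᵥ P := by
  refine sub_eq_zero.mp (eq_zero_of_mul_pow_mulVec_eq hobs hz (e := moment μ x G 0 - P)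
    fun i hi => ?_)
  rw [← mulVec_mulVec, ← moment_sub_pow_smul_eq hx hP (fun j hj => hu j hj.le)
    (fun j hj => hΩ j hj.le) i hi, mulVec_sub, mulVec_smul, ← add_zero (C *ᵥ _),
    ← mulVec_zero D, ← hu i hi, ← moment_output_eq_mulVec hy, hT i hi, smul_sub]

theorem moment_output_eq_pow_smul (hx : ∀ c, μ c • x c = A *ᵥ x c + B *ᵥ u c + μ c • ξ)
    (hy : ∀ c, y c = C *ᵥ x c + D *ᵥ u c) (hP : (z • 1 - A) *ᵥ P = z • ξ)
    (hu : ∀ i ≤ L, moment μ u G i = 0)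
    (hΩ : ∀ i ≤ L, moment μ (fun c (_ : Unit) => μ c) G i = fun _ => z ^ i * z)
    (h0 : moment μ x G 0 = P) : ∀ i ≤ L, moment μ y G i = z ^ i • C *ᵥ P := by
  intro i hi
  have hstate := moment_sub_pow_smul_eq hx hP (fun j hj => hu j hj.le) (fun j hj => hΩ j hj.le) i hi
  rw [h0, sub_self, mulVec_zero, sub_eq_zero] at hstate
  rw [moment_output_eq_mulVec hy, hu i hi, mulVec_zero, add_zero, hstate, mulVec_smul]

end Transient

section SpectralData

/-- Frequencies of the columns of `Ψ`: `e^{jω_k}` for `k < M`, then `e^{-jω_k}` for `0 < k < M`. -/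
noncomputable def psiFreq (M : ℕ) : Fin M ⊕ Fin (M - 1) → ℂ :=
  Sum.elim (fun k => specExp M k) (fun k => star (specExp M (k + 1)))

def psiCol {M : ℕ} {α : Type} (S : Fin M → α → ℂ) : Fin M ⊕ Fin (M - 1) → α → ℂ :=
  Sum.elim S (fun k => star (S ⟨k + 1, by omega⟩))

theorem PsiMat_eq_hankel (L M : ℕ) {α : Type} (S : Fin M → α → ℂ) :
    PsiMat L M S = hankel L (psiFreq M) (psiCol S) := by
  ext ⟨i, a⟩ (k | k) <;> simp [PsiMat, hankel, psiFreq, psiCol]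

theorem PsiMat_mulVec_eq_iff {L M : ℕ} {α : Type} [Fintype α] (S : Fin M → α → ℂ)
    (G : Fin M ⊕ Fin (M - 1) → ℂ) (f : Fin L × α → ℂ) :
    PsiMat L M S *ᵥ G = f ↔ ∀ i : Fin L, moment (psiFreq M) (psiCol S) G i = fun a => f (i, a) := by
  simp only [funext_iff, Prod.forall, PsiMat_eq_hankel, hankel_mulVec_apply]

theorem psiCol_specExp (M : ℕ) :
    psiCol (fun k (_ : Unit) => specExp M k) = fun c _ => psiFreq M c := by
  ext (k | k) <;> rfl

variable {M nx nu ny : ℕ} {A : Matrix (Fin nx) (Fin nx) ℝ} {B : Matrix (Fin nx) (Fin nu) ℝ}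
  {C : Matrix (Fin ny) (Fin nx) ℝ} {D : Matrix (Fin ny) (Fin nu) ℝ}
  {U : Fin M → Fin nu → ℂ} {X : Fin M → Fin nx → ℂ} {Y : Fin M → Fin ny → ℂ}

theorem psiCol_state_eq {ξ : Fin nx → ℂ} (hξ : star ξ = ξ) (h : ∀ k : Fin M, specExp M k • X k
      = A.map ofReal *ᵥ X k + B.map ofReal *ᵥ U k + specExp M k • ξ)
    (c : Fin M ⊕ Fin (M - 1)) : psiFreq M c • psiCol X c
      = A.map ofReal *ᵥ psiCol X c + B.map ofReal *ᵥ psiCol U c + psiFreq M c • ξ := by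
  rcases c with k | k
  · exact h k
  · have hk := congrArg star (h ⟨k + 1, by omega⟩)
    simp only [star_smul, star_add, star_map_ofReal_mulVec] at hk
    rwa [hξ] at hk

theorem psiCol_output_eq (h : ∀ k : Fin M, Y k = C.map ofReal *ᵥ X k + D.map ofReal *ᵥ U k)
    (c : Fin M ⊕ Fin (M - 1)) :
    psiCol Y c = C.map ofReal *ᵥ psiCol X c + D.map ofReal *ᵥ psiCol U c := by
  rcases c with k | k
  · exact h k
  · have hk := congrArg star (h ⟨k + 1, by omega⟩)
    simp only [star_add, star_map_ofReal_mulVec] at hk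
    exact hk

theorem eq_zero_of_vecMul_pow_mul_eq_zero (hctrb : (ctrbMat A B).rank = nx) {b : Fin nx → ℂ}
    (hb : ∀ k, b ᵥ* (A.map ofReal ^ k * B.map ofReal) = 0) : b = 0 := by
  have hreal : ∀ v : Fin nx → ℝ, (∀ k, (A ^ k * B)ᵀ *ᵥ v = 0) → v = 0 := fun v hv =>
    eq_zero_of_vecMul_eq_zero_of_rank_eq_card (hctrb.trans (Fintype.card_fin nx).symm) <| by
      ext ⟨k, q⟩
      rw [show (v ᵥ* ctrbMat A B) (k, q) = (v ᵥ* (A ^ (k : ℕ) * B)) q from rfl,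
        ← mulVec_transpose]
      exact congrFun (hv k) q
  have hparts : ∀ k, (A ^ k * B)ᵀ *ᵥ (fun i => (b i).re) = 0 ∧
      (A ^ k * B)ᵀ *ᵥ (fun i => (b i).im) = 0 := fun k => by
    rw [← map_ofReal_mulVec_eq_zero_iff, transpose_map, mulVec_transpose,
      ← map_ofReal_pow_mul]
    exact hb k
  funext i
  apply Complex.ext
  · exact congrFun (hreal _ fun k => (hparts k).1) i
  · exact congrFun (hreal _ fun k => (hparts k).2) i


theorem exists_psi_moment_eq {L : ℕ} {ξ : Fin nx → ℂ} (hctrb : (ctrbMat A B).rank = nx)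
    (hx : ∀ c, psiFreq M c • psiCol X c
      = A.map ofReal *ᵥ psiCol X c + B.map ofReal *ᵥ psiCol U c + psiFreq M c • ξ)
    (hPE : (PsiMat (L + 1 + nx) M
        (fun k => Sum.elim (U k) (fun _ : Unit => specExp M k))).rank
      = Fintype.card (Fin (L + 1 + nx) × (Fin nu ⊕ Unit)))
    (a : ℕ → Fin nu → ℂ) (ω : ℕ → ℂ) (e : Fin nx → ℂ) :
    ∃ G, (∀ i ≤ L, moment (psiFreq M) (psiCol U) G i = a i ∧
        moment (psiFreq M) (fun c (_ : Unit) => psiFreq M c) G i = fun _ => ω i) ∧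
      moment (psiFreq M) (psiCol X) G 0 = e := by
  set V := fun k => Sum.elim (U k) (fun _ : Unit => specExp M k)
  have hV : psiCol V = fun c => Sum.elim (psiCol U c) (fun _ => psiFreq M c) := by
    ext (k | k) (q | q) <;> rfl
  set Bt := (B.map ofReal).fromCols (replicateCol Unit ξ)
  have hdyn : ∀ c, psiFreq M c • psiCol X c
      = A.map ofReal *ᵥ psiCol X c + Bt *ᵥ psiCol V c := fun c => by
    rw [hx c, hV, fromCols_mulVec, add_assoc]
    congr 2
    ext j
    simp [replicateCol, mulVec, dotProduct, mul_comm]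
  have hctrbBt : ∀ b, (∀ k, b ᵥ* (A.map ofReal ^ k * Bt) = 0) → b = 0 := fun b hb =>
    eq_zero_of_vecMul_pow_mul_eq_zero hctrb fun k => by
      simpa [Bt, mul_fromCols, vecMul_fromCols] using congrArg (· ∘ Sum.inl) (hb k)
  have hPE' : (hankel (L + 1 + Fintype.card (Fin nx)) (psiFreq M) (psiCol V)).rank
      = Fintype.card (Fin (L + 1 + Fintype.card (Fin nx)) × (Fin nu ⊕ Unit)) := by
    rw [Fintype.card_fin, ← PsiMat_eq_hankel]
    exact hPE
  obtain ⟨G, hG, hG0⟩ := exists_moment_eq hdyn hctrbBt (Nat.succ_pos L) hPE'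
    (fun i => Sum.elim (a i) fun _ => ω i) e
  refine ⟨G, fun i hi => ?_, hG0⟩
  have hi' := hG ⟨i, by omega⟩
  rw [hV, moment_sumElim] at hi'
  exact ⟨congrArg (· ∘ Sum.inl) hi', congrArg (· ∘ Sum.inr) hi'⟩

end SpectralData

/-- Theorem 4(ii), transient evaluation: under the same persistence-of-
    excitation and observability hypotheses, the linear system (sep-2) has a unique
    solution for T_z, and it equals the transient T(z) = C(zI-A)⁻¹ z (x₀ - x_{2M}). -/
theorem transient_evaluation (M nx nu ny L0 : ℕ)
    (A : Matrix (Fin nx) (Fin nx) ℝ) (B : Matrix (Fin nx) (Fin nu) ℝ)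
    (C : Matrix (Fin ny) (Fin nx) ℝ) (D : Matrix (Fin ny) (Fin nu) ℝ)
    (x0 x2M : Fin nx → ℝ)
    (U : Fin M → Fin nu → ℂ) (X : Fin M → Fin nx → ℂ) (Y : Fin M → Fin ny → ℂ)
    (z : ℂ)
    (hctrb : (ctrbMat A B).rank = nx)
    (hspec : ∀ k : Fin M, specExp M k • X k
          = (A.map Complex.ofReal).mulVec (X k) + (B.map Complex.ofReal).mulVec (U k)
            + specExp M k • (fun i => (x0 i : ℂ) - (x2M i : ℂ)) ∧
        Y k = (C.map Complex.ofReal).mulVec (X k) + (D.map Complex.ofReal).mulVec (U k))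
    (hL0 : obsIndex nx ny A C ≤ L0)
    (hPE : (PsiMat (L0 + 1 + nx) M
              (fun k => Sum.elim (U k) (fun _ : Unit => specExp M k))).rank
        = Fintype.card (Fin (L0 + 1 + nx) × (Fin nu ⊕ Unit)))
    (hz : z ∉ spectrum ℂ (A.map Complex.ofReal)) :
    let Ttrue : Fin ny → ℂ :=
      ((C.map Complex.ofReal)
        * (z • (1 : Matrix (Fin nx) (Fin nx) ℂ) - A.map Complex.ofReal)⁻¹).mulVec
        (z • fun i => (x0 i : ℂ) - (x2M i : ℂ))
    (∃ G : (Fin M ⊕ Fin (M - 1)) → ℂ,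
      (PsiMat (L0 + 1) M U).mulVec G = 0 ∧
      (PsiMat (L0 + 1) M (fun k (_ : Unit) => specExp M k)).mulVec G
        = (fun p => z ^ (p.1 : ℕ) * z) ∧
      (PsiMat (L0 + 1) M Y).mulVec G = (fun p => z ^ (p.1 : ℕ) * Ttrue p.2)) ∧
    (∀ (Tz : Fin ny → ℂ) (G : (Fin M ⊕ Fin (M - 1)) → ℂ),
      ((PsiMat (L0 + 1) M U).mulVec G = 0 ∧
       (PsiMat (L0 + 1) M (fun k (_ : Unit) => specExp M k)).mulVec G
        = (fun p => z ^ (p.1 : ℕ) * z) ∧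
       (PsiMat (L0 + 1) M Y).mulVec G = (fun p => z ^ (p.1 : ℕ) * Tz p.2)) →
      Tz = Ttrue) := by
  intro Ttrue
  set ξ : Fin nx → ℂ := fun i => (x0 i : ℂ) - (x2M i : ℂ)
  have hξ : star ξ = ξ := funext fun i => by simp [ξ]
  have hx := psiCol_state_eq hξ fun k => (hspec k).1
  have hy := psiCol_output_eq fun k => (hspec k).2
  have hzA : IsUnit (z • 1 - A.map ofReal) := by
    simpa [Algebra.algebraMap_eq_smul_one] using spectrum.notMem_iff.mp hz
  set P := (z • 1 - A.map ofReal)⁻¹ *ᵥ (z • ξ)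
  have hP : (z • 1 - A.map ofReal) *ᵥ P = z • ξ := by
    rw [mulVec_mulVec, mul_nonsing_inv _ ((isUnit_iff_isUnit_det _).mp hzA), one_mulVec]
  have hT : Ttrue = C.map ofReal *ᵥ P := (mulVec_mulVec _ _ _).symm
  simp only [PsiMat_mulVec_eq_iff, psiCol_specExp, Fin.forall_iff, Nat.lt_succ_iff, Pi.zero_apply]
  refine ⟨?_, fun Tz G ⟨hU, hΩ, hY⟩ => ?_⟩
  · obtain ⟨G, hG, hG0⟩ := exists_psi_moment_eq hctrb hx hPE (fun _ => 0) (fun i => z ^ i * z) P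
    refine ⟨G, fun i hi => (hG i hi).1, fun i hi => (hG i hi).2, fun i hi => ?_⟩
    rw [hT]
    exact moment_output_eq_pow_smul hx hy hP (fun j hj => (hG j hj).1) (fun j hj => (hG j hj).2)
      hG0 i hi
  · rw [hT]
    exact eq_mulVec_of_moment_eq hx hy
      (fun _ hv => map_mul_pow_mulVec_eq_zero_of_obsIndex_le A C hL0 hv) hzA hP hU hΩ hY
end
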